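/- arXiv:math/0403007 — 4 statements merged into one kernel-verified Lean document; each statement's English description precedes it below -/
import Mathlib

section
/- Let N ≥ 1 and let X : ℝᴺ → ℝᴺ be a continuously differentiable vector field with X(z₀) = 0 and DX(z₀) = 0 at some point z₀. Then for every T > 0 there exists an open neighborhood U of z₀ with the following property: there is no non-constant continuously differentiable curve γ : ℝ → ℝᴺ satisfying γ′(s) = X(γ(s)) for all s, γ(ℝ) ⊆ U, and γ(s + T′) = γ(s) for all s for some period T′ with 0 < T′ ≤ T. -/
/-!
A periodic orbit of period `T` of a vector field that is `K`-Lipschitz along the orbit satisfies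
`K * T ≥ 1`. Indeed, if the speed `‖X ∘ γ‖` is at most `M`, then over one period `X ∘ γ` varies by
at most `K * M * T`, while its mean over a period vanishes (the orbit closes up); so
`‖X ∘ γ‖ ≤ K * M * T`, which forces `M = 0` when `K * T < 1`. Near a zero of `DX` the field is
Lipschitz with arbitrarily small constant, so small neighbourhoods of `z₀` contain no periodic
orbits of period at most `T`.
-/

open Function Set Metric
open scoped NNReal

theorem Function.Periodic.exists_forall_norm_le {E : Type*} [SeminormedAddCommGroup E]
    {f : ℝ → E} {T : ℝ} (hf : Periodic f T) (hT : T ≠ 0) (hcont : Continuous f) :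
    ∃ t₀, ∀ t, ‖f t‖ ≤ ‖f t₀‖ := by
  obtain ⟨_, ⟨t₀, rfl⟩, hmax⟩ := (hf.compact_of_continuous hT hcont).exists_isMaxOn
    (range_nonempty f) continuous_norm.continuousOn
  exact ⟨t₀, fun t => hmax (mem_range_self t)⟩

theorem ContDiff.exists_lipschitzOnWith_ball_of_fderiv_eq_zero {E F : Type*}
    [NormedAddCommGroup E] [NormedSpace ℝ E] [NormedAddCommGroup F] [NormedSpace ℝ F]
    {f : E → F} {z₀ : E} (hf : ContDiff ℝ 1 f) (hDf : fderiv ℝ f z₀ = 0) {K : ℝ≥0} (hK : 0 < K) :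
    ∃ r > 0, LipschitzOnWith K f (ball z₀ r) := by
  have hsmall : ∀ᶠ y in nhds z₀, ‖fderiv ℝ f y‖₊ < K :=
    (hf.continuous_fderiv one_ne_zero).nnnorm.continuousAt.eventually_lt
      continuousAt_const (by simpa [hDf] using hK)
  obtain ⟨r, hr, hball⟩ := Metric.eventually_nhds_iff_ball.1 hsmall
  exact ⟨r, hr, (convex_ball z₀ r).lipschitzOnWith_of_nnnorm_fderiv_le
    (fun y _ => hf.differentiable one_ne_zero y) fun y hy => (hball y hy).le⟩

section PeriodicOrbit

variable {E : Type*} [NormedAddCommGroup E] [NormedSpace ℝ E] {X : E → E} {γ : ℝ → E}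
  {K : ℝ≥0} {T M : ℝ}

theorem norm_le_of_periodic_of_lipschitzOnWith (hX : LipschitzOnWith K X (range γ))
    (hγ : ∀ t, HasDerivAt γ (X (γ t)) t) (hper : Periodic γ T) (hT : 0 < T)
    (hM : ∀ t, ‖X (γ t)‖ ≤ M) (s : ℝ) : ‖X (γ s)‖ ≤ K * M * T := by
  have hM₀ : 0 ≤ M := (norm_nonneg _).trans (hM s)
  have hvar : ∀ t ∈ Icc s (s + T), ‖X (γ t) - X (γ s)‖ ≤ K * M * T := by
    intro t ht
    have hdist : ‖γ t - γ s‖ ≤ M * ‖t - s‖ :=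
      convex_univ.norm_image_sub_le_of_norm_hasDerivWithin_le
        (fun u _ => (hγ u).hasDerivWithinAt) (fun u _ => hM u) (mem_univ s) (mem_univ t)
    have hts : ‖t - s‖ ≤ T := by
      rw [Real.norm_of_nonneg (by linarith [ht.1])]
      linarith [ht.2]
    calc ‖X (γ t) - X (γ s)‖ ≤ K * ‖γ t - γ s‖ :=
          hX.norm_sub_le (mem_range_self t) (mem_range_self s)
      _ ≤ K * (M * T) := by gcongr; exact hdist.trans (by gcongr)
      _ = K * M * T := by ring
  -- `t ↦ γ t - t • X (γ s)` has derivative `X (γ t) - X (γ s)` and changes by `-T • X (γ s)`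
  -- over `[s, s + T]`, since `γ` closes up.
  have hderiv : ∀ t, HasDerivAt (fun u => γ u - u • X (γ s)) (X (γ t) - X (γ s)) t := fun t => by
    have h := (hγ t).sub ((hasDerivAt_id' t).smul_const (X (γ s)))
    rwa [one_smul] at h
  have hmvt := norm_image_sub_le_of_norm_deriv_le_segment'
    (fun t _ => (hderiv t).hasDerivWithinAt) (fun t ht => hvar t (Ico_subset_Icc_self ht))
    (s + T) ⟨by linarith, le_rfl⟩
  have hclose : γ (s + T) - (s + T) • X (γ s) - (γ s - s • X (γ s)) = -(T • X (γ s)) := by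
    rw [hper s, add_smul]; abel
  rw [hclose, norm_neg, norm_smul, Real.norm_of_nonneg hT.le, add_sub_cancel_left,
    mul_comm] at hmvt
  exact le_of_mul_le_mul_right hmvt hT

theorem Function.Periodic.eq_of_hasDerivAt_of_lipschitzOnWith (hper : Periodic γ T) (hT : 0 < T)
    (hX : LipschitzOnWith K X (range γ)) (hγ : ∀ t, HasDerivAt γ (X (γ t)) t) (hKT : K * T < 1)
    (s t : ℝ) : γ s = γ t := by
  have hγc : Continuous γ := continuous_iff_continuousAt.2 fun t => (hγ t).continuousAt
  obtain ⟨t₀, hmax⟩ : ∃ t₀, ∀ u, ‖X (γ u)‖ ≤ ‖X (γ t₀)‖ :=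
    (hper.comp X).exists_forall_norm_le hT.ne' (hX.continuousOn.comp_continuous hγc mem_range_self)
  have hbound := norm_le_of_periodic_of_lipschitzOnWith hX hγ hper hT hmax t₀
  have hmax_nonpos : ‖X (γ t₀)‖ ≤ 0 := by
    nlinarith [mul_le_mul_of_nonneg_left hKT.le (norm_nonneg (X (γ t₀)))]
  have hstill : ∀ u, X (γ u) = 0 := fun u => norm_le_zero_iff.1 ((hmax u).trans hmax_nonpos)
  exact is_const_of_deriv_eq_zero (fun u => (hγ u).differentiableAt)
    (fun u => (hγ u).deriv.trans (hstill u)) s t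

end PeriodicOrbit

theorem stmt_4_general (N : ℕ)
    (X : EuclideanSpace ℝ (Fin N) → EuclideanSpace ℝ (Fin N))
    (hX : ContDiff ℝ 1 X)
    (z₀ : EuclideanSpace ℝ (Fin N))
    (hDX : fderiv ℝ X z₀ = 0) :
    ∀ T : ℝ, 0 < T →
      ∃ U : Set (EuclideanSpace ℝ (Fin N)), IsOpen U ∧ z₀ ∈ U ∧
        ¬ ∃ γ : ℝ → EuclideanSpace ℝ (Fin N),
            ContDiff ℝ 1 γ ∧
            (∀ s : ℝ, deriv γ s = X (γ s)) ∧
            Set.range γ ⊆ U ∧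
            (∃ s₁ s₂ : ℝ, γ s₁ ≠ γ s₂) ∧
            (∃ T' : ℝ, 0 < T' ∧ T' ≤ T ∧ ∀ s : ℝ, γ (s + T') = γ s) := by
  intro T hT
  let K : ℝ≥0 := ⟨1 / (2 * T), by positivity⟩
  obtain ⟨r, hr, hlip⟩ := hX.exists_lipschitzOnWith_ball_of_fderiv_eq_zero hDX
    (show 0 < K from NNReal.coe_pos.1 (show (0 : ℝ) < 1 / (2 * T) by positivity))
  refine ⟨ball z₀ r, isOpen_ball, mem_ball_self hr, ?_⟩
  rintro ⟨γ, hγ, hode, hrange, ⟨s₁, s₂, hne⟩, T', hT'pos, hT'le, hper⟩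
  have hγ' : ∀ s, HasDerivAt γ (X (γ s)) s := fun s =>
    hode s ▸ (hγ.differentiable one_ne_zero s).hasDerivAt
  have hKT : (K : ℝ) * T' < 1 :=
    calc (K : ℝ) * T' ≤ 1 / (2 * T) * T := by gcongr; rfl
      _ < 1 := by field_simp; norm_num
  exact hne (Periodic.eq_of_hasDerivAt_of_lipschitzOnWith hper hT'pos (hlip.mono hrange) hγ' hKT
    s₁ s₂)

/-- If `X` is a `C¹` vector field on `ℝᴺ` with `X(z₀) = 0` and
`DX(z₀) = 0`, then for every `T > 0` there is an open neighborhood `U` of `z₀`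
containing no non-constant periodic orbit of `X` of period `T′` with `0 < T′ ≤ T`. -/
theorem stmt_4 (N : ℕ) (hN : 1 ≤ N)
    (X : EuclideanSpace ℝ (Fin N) → EuclideanSpace ℝ (Fin N))
    (hX : ContDiff ℝ 1 X)
    (z₀ : EuclideanSpace ℝ (Fin N)) (hz₀ : X z₀ = 0)
    (hDX : fderiv ℝ X z₀ = 0) :
    ∀ T : ℝ, 0 < T →
      ∃ U : Set (EuclideanSpace ℝ (Fin N)), IsOpen U ∧ z₀ ∈ U ∧
        ¬ ∃ γ : ℝ → EuclideanSpace ℝ (Fin N),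
            ContDiff ℝ 1 γ ∧
            (∀ s : ℝ, deriv γ s = X (γ s)) ∧
            Set.range γ ⊆ U ∧
            (∃ s₁ s₂ : ℝ, γ s₁ ≠ γ s₂) ∧
            (∃ T' : ℝ, 0 < T' ∧ T' ≤ T ∧ ∀ s : ℝ, γ (s + T') = γ s) :=
  stmt_4_general N X hX z₀ hDX
end

section
/- Let N ≥ 1, let k ≥ 3 be an integer, let X : ℝᴺ → ℝᴺ be a smooth (C^∞) vector field, and let Φ : ℝ × ℝᴺ → ℝᴺ be a smooth map with Φ(0,z) = z for all z and ∂_t Φ(t,z) = X(Φ(t,z)) for all (t,z). Let z₀ ∈ ℝᴺ satisfy X(z₀) = 0 and D^j X(z₀) = 0 for all 1 ≤ j ≤ k−2 (the iterated Fréchet derivatives of X at z₀ of orders 1 through k−2 vanish). Then for every t ∈ ℝ: (i) Φ(t,z₀) = z₀; (ii) the derivative of z ↦ Φ(t,z) at z₀ is the identity map; (iii) the iterated derivatives in z of Φ(t,·) at z₀ of each order j with 2 ≤ j ≤ k−2 vanish; and (iv) the iterated derivative in z of Φ(t,·) at z₀ of order k−1 equals t · D^{k−1}X(z₀). -/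
open scoped ContDiff
open Set

universe u

section Aux
variable {E : Type u} [NormedAddCommGroup E] [NormedSpace ℝ E]

theorem my_shift (n : ℕ) {F : Type u} [NormedAddCommGroup F] [NormedSpace ℝ F]
    (f : E → F) (hf : ContDiff ℝ ∞ f) (c : E) (x : E) :
    iteratedFDeriv ℝ n (fun y => f (y + c)) x = iteratedFDeriv ℝ n f (x + c) := by
  induction n generalizing F with
  | zero => ext m; simp
  | succ n ih =>
    have hdf : ContDiff ℝ ∞ (fderiv ℝ f) := hf.fderiv_right (by simp)
    ext m
    rw [iteratedFDeriv_succ_apply_right, iteratedFDeriv_succ_apply_right]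
    have h1 : (fun y => fderiv ℝ (fun z => f (z + c)) y) = fun y => fderiv ℝ f (y + c) := by
      funext y
      have h2 : HasFDerivAt (fun z => f (z + c)) (fderiv ℝ f (y + c)) y := by
        have := ((hf.differentiable (by norm_cast)) (y + c)).hasFDerivAt
        have h3 := this.comp y ((hasFDerivAt_id y).add_const c)
        simpa [Function.comp_def] using h3
      exact h2.fderiv
    rw [h1, ih (fderiv ℝ f) hdf]

theorem my_swap (j : ℕ) {F : Type u} [NormedAddCommGroup F] [NormedSpace ℝ F]
    (f : E → F) (hf : ContDiff ℝ ∞ f) (p : E) (a : E) (m : Fin j → E) :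
    iteratedFDeriv ℝ (j + 1) f p (Fin.cons a m) =
      iteratedFDeriv ℝ j (fun x => fderiv ℝ f x a) p m := by
  induction j generalizing F with
  | zero =>
    rw [iteratedFDeriv_one_apply, iteratedFDeriv_zero_apply]
    simp
  | succ j ih =>
    have hdf : ContDiff ℝ ∞ (fderiv ℝ f) := hf.fderiv_right (by simp)
    have h0 : Fin.init (Fin.cons a m : Fin (j + 2) → E) = Fin.cons a (Fin.init m) := by
      funext i
      simp only [Fin.init]
      refine Fin.cases ?_ (fun i => ?_) i
      · simp
      · rw [← Fin.succ_castSucc, Fin.cons_succ, Fin.cons_succ]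
        rfl
    have h1 : (Fin.cons a m : Fin (j + 2) → E) (Fin.last (j + 1)) = m (Fin.last j) := by
      rw [← Fin.succ_last, Fin.cons_succ]
    have L : iteratedFDeriv ℝ (j + 2) f p (Fin.cons a m)
        = (iteratedFDeriv ℝ (j + 1) (fderiv ℝ f) p (Fin.cons a (Fin.init m))) (m (Fin.last j)) := by
      rw [iteratedFDeriv_succ_apply_right, h0, h1]
    rw [L, ih (fderiv ℝ f) hdf, iteratedFDeriv_succ_apply_right]
    have key : (fun x => fderiv ℝ (fderiv ℝ f) x a) =
        fderiv ℝ (fun x => fderiv ℝ f x a) := by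
      funext x
      have hdiff : ∀ y, HasFDerivAt f (fderiv ℝ f y) y :=
        fun y => ((hf.differentiable (by norm_cast)) y).hasFDerivAt
      have hx : HasFDerivAt (fderiv ℝ f) (fderiv ℝ (fderiv ℝ f) x) x :=
        ((hdf.differentiable (by norm_cast)) x).hasFDerivAt
      have heval : HasFDerivAt (fun y => fderiv ℝ f y a)
          ((ContinuousLinearMap.apply ℝ F a).comp (fderiv ℝ (fderiv ℝ f) x)) x :=
        (ContinuousLinearMap.apply ℝ F a).hasFDerivAt.comp x hx
      rw [heval.fderiv]
      ext w
      exact second_derivative_symmetric hdiff hx a w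
    rw [key]

variable {F : Type u} [NormedAddCommGroup F] [NormedSpace ℝ F]

theorem my_partial (j : ℕ) (f : ℝ × E → F) (hf : ContDiff ℝ ∞ f) (t : ℝ) (z : E)
    (v : Fin j → E) :
    iteratedFDeriv ℝ j (fun w => f (t, w)) z v =
      iteratedFDeriv ℝ j f (t, z) (fun i => ((0 : ℝ), v i)) := by
  have hshift : ContDiff ℝ ∞ (fun p : ℝ × E => f (p + (t, 0))) :=
    hf.comp (contDiff_id.add contDiff_const)
  have h1 : (fun w => f (t, w)) =
      (fun p : ℝ × E => f (p + (t, 0))) ∘ (ContinuousLinearMap.inr ℝ ℝ E) := by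
    funext w
    simp [Prod.ext_iff]
  rw [h1, ContinuousLinearMap.iteratedFDeriv_comp_right _ hshift _ (by norm_cast; exact le_top)]
  rw [ContinuousMultilinearMap.compContinuousLinearMap_apply]
  rw [my_shift j f hf (t, 0)]
  norm_num

theorem my_tderiv (j : ℕ) (f : ℝ × E → F) (hf : ContDiff ℝ ∞ f) (z : E)
    (v : Fin j → ℝ × E) (t : ℝ) :
    HasDerivAt (fun s => iteratedFDeriv ℝ j f (s, z) v)
      (iteratedFDeriv ℝ (j + 1) f (t, z) (Fin.cons ((1 : ℝ), (0 : E)) v)) t := by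
  have hDj : ContDiff ℝ ∞ (iteratedFDeriv ℝ j f) := hf.iteratedFDeriv_right (by norm_cast)
  have hγ : HasDerivAt (fun s : ℝ => (s, z)) ((1 : ℝ), (0 : E)) t :=
    (hasDerivAt_id t).prodMk (hasDerivAt_const t z)
  have hD : HasFDerivAt (iteratedFDeriv ℝ j f) (fderiv ℝ (iteratedFDeriv ℝ j f) (t, z)) (t, z) :=
    ((hDj.differentiable (by norm_cast)) (t, z)).hasFDerivAt
  have h1 : HasDerivAt (fun s : ℝ => iteratedFDeriv ℝ j f (s, z))
      (fderiv ℝ (iteratedFDeriv ℝ j f) (t, z) ((1 : ℝ), (0 : E))) t := hD.comp_hasDerivAt t hγ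
  have h2 := ((ContinuousMultilinearMap.apply ℝ (fun _ : Fin j => ℝ × E) F v).hasFDerivAt).comp_hasDerivAt t h1
  have h3 : iteratedFDeriv ℝ (j + 1) f (t, z) (Fin.cons ((1 : ℝ), (0 : E)) v)
      = (fderiv ℝ (iteratedFDeriv ℝ j f) (t, z) ((1 : ℝ), (0 : E))) v :=
    iteratedFDeriv_succ_apply_left _
  rw [h3]
  exact h2

theorem my_id_iter (j : ℕ) (hj : 2 ≤ j) (x : E) :
    iteratedFDeriv ℝ j (fun z : E => z) x = 0 := by
  obtain ⟨i, rfl⟩ : ∃ i, j = i + 2 := ⟨j - 2, by omega⟩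
  ext m
  rw [iteratedFDeriv_succ_apply_right]
  have h1 : (fun y : E => fderiv ℝ (fun z : E => z) y)
      = fun _ => ContinuousLinearMap.id ℝ E := by
    funext y
    exact fderiv_id
  rw [h1, iteratedFDeriv_const_of_ne (by omega)]
  simp

end Aux

section ODE

theorem my_fixed {E : Type} [NormedAddCommGroup E] [NormedSpace ℝ E]
    (X : E → E) (hX : ContDiff ℝ ∞ X)
    (Φ : ℝ × E → E) (hΦ : ContDiff ℝ ∞ Φ)
    (hΦ0 : ∀ z, Φ (0, z) = z)
    (hflow : ∀ t : ℝ, ∀ z, HasDerivAt (fun s : ℝ => Φ (s, z)) (X (Φ (t, z))) t)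
    (z₀ : E) (hz₀ : X z₀ = 0) : ∀ t : ℝ, Φ (t, z₀) = z₀ := by
  set S : Set ℝ := {t | Φ (t, z₀) = z₀} with hS
  have hcont : Continuous fun s : ℝ => Φ (s, z₀) :=
    hΦ.continuous.comp (continuous_id.prodMk continuous_const)
  have hclosed : IsClosed S := isClosed_eq hcont continuous_const
  have hopen : IsOpen S := by
    rw [isOpen_iff_mem_nhds]
    intro t₀ ht₀
    obtain ⟨K, u, hu, hKu⟩ : ∃ K, ∃ u ∈ nhds z₀, LipschitzOnWith K X u :=
      (hX.contDiffAt.of_le (by norm_cast)).exists_lipschitzOnWith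
    obtain ⟨r, hr, hball⟩ := Metric.mem_nhds_iff.mp hu
    have hz₀u : z₀ ∈ u := mem_of_mem_nhds hu
    have h1 : ∀ᶠ s in nhds t₀, Φ (s, z₀) ∈ Metric.ball z₀ r := by
      have h2 : Φ (t₀, z₀) = z₀ := ht₀
      apply (hcont.continuousAt (x := t₀)).preimage_mem_nhds
      rw [h2]
      exact Metric.ball_mem_nhds _ hr
    obtain ⟨ε, hε, hball2⟩ := Metric.eventually_nhds_iff_ball.mp h1
    have key : EqOn (fun s => Φ (s, z₀)) (fun _ => z₀) (Icc (t₀ - ε/2) (t₀ + ε/2)) := by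
      apply ODE_solution_unique_of_mem_Icc (v := fun _ y => X y) (s := fun _ => u)
        (K := K) (t₀ := t₀)
      · intro _ _; exact hKu
      · constructor <;> [linarith; linarith]
      · exact (hcont.continuousOn)
      · intro s _; exact hflow s z₀
      · intro s hs
        apply hball
        apply hball2
        simp only [Metric.mem_ball, Real.dist_eq, abs_sub_lt_iff]
        constructor <;> [linarith [hs.1, hs.2]; linarith [hs.1, hs.2]]
      · exact continuousOn_const
      · intro s _
        simpa [hz₀] using (hasDerivAt_const s z₀)
      · intro s _; exact hz₀u
      · exact ht₀
    have hsub : Metric.ball t₀ (ε/4) ⊆ S := by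
      intro s hs
      have hsI : s ∈ Icc (t₀ - ε/2) (t₀ + ε/2) := by
        simp only [Metric.mem_ball, Real.dist_eq, abs_sub_lt_iff] at hs
        constructor <;> [linarith [hs.1, hs.2]; linarith [hs.1, hs.2]]
      exact key hsI
    exact Filter.mem_of_superset (Metric.ball_mem_nhds _ (by linarith)) hsub
  have huniv : S = univ := by
    have hne : S.Nonempty := ⟨0, hΦ0 z₀⟩
    exact (isClopen_iff.mp ⟨hclosed, hopen⟩).resolve_left (Nonempty.ne_empty hne)
  intro t
  have : t ∈ S := huniv ▸ mem_univ t
  exact this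

end ODE

section FdB

theorem my_strictMono_id {n : ℕ} (f : Fin n → Fin n) (hf : StrictMono f) : ∀ i, f i = i := by
  haveI : WellFoundedLT (Fin n) := inferInstance
  have le1 : ∀ i : Fin n, i ≤ f i := fun i => StrictMono.le_apply hf
  have hg : StrictMono fun i : Fin n => (f i.rev).rev := by
    intro a b hab
    simp only [Fin.rev_lt_rev]
    exact hf (by simpa [Fin.rev_lt_rev] using hab)
  have le2 : ∀ i : Fin n, i ≤ (f i.rev).rev := fun i => StrictMono.le_apply hg
  intro i
  refine le_antisymm ?_ (le1 i)
  have := le2 i.rev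
  rwa [Fin.rev_rev, Fin.rev_le_rev] at this

theorem my_emb_eq {n : ℕ} (c : OrderedFinpartition n) (h : c.length = n)
    (hps : ∀ i, c.partSize i = 1) :
    ∀ (m : Fin c.length) (r : Fin (c.partSize m)), (c.emb m r : ℕ) = (m : ℕ) := by
  intro m r
  set f : Fin c.length → Fin n := fun m => c.emb m ⟨c.partSize m - 1,
    Nat.sub_one_lt_of_lt (c.partSize_pos m)⟩ with hf
  have hsm : StrictMono f := c.parts_strictMono
  have hr : r = ⟨c.partSize m - 1, Nat.sub_one_lt_of_lt (c.partSize_pos m)⟩ := by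
    ext
    show (r : ℕ) = c.partSize m - 1
    have h1 : (r : ℕ) < c.partSize m := r.2
    have h2 := hps m
    omega
  have hcast : StrictMono (f ∘ Fin.cast h.symm) := by
    apply hsm.comp
    intro a b hab
    rw [Fin.lt_def] at hab ⊢
    exact hab
  have key := my_strictMono_id (f ∘ Fin.cast h.symm) hcast (Fin.cast h m)
  have key2 : f m = Fin.cast h m := by
    have h3 : Fin.cast h.symm (Fin.cast h m) = m := rfl
    simpa [Function.comp, h3] using key
  have h4 : c.emb m r = f m := by rw [hr]
  rw [h4, key2]
  rfl

theorem my_atomic {n : ℕ} (c : OrderedFinpartition n) (h : c.length = n) :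
    c = OrderedFinpartition.atomic n := by
  have hsum : ∑ i, c.partSize i = n := by
    have := Fintype.card_congr c.equivSigma
    simpa [Fintype.card_sigma] using this
  have hps : ∀ i, c.partSize i = 1 := by
    have hle : ∀ i ∈ Finset.univ, 1 ≤ c.partSize i := fun i _ => c.partSize_pos i
    have hcard : ∑ _i : Fin c.length, 1 = n := by simp [h]
    have := (Finset.sum_eq_sum_iff_of_le hle).mp (by rw [hsum, hcard])
    intro i
    exact (this i (Finset.mem_univ i)).symm
  have hemb := my_emb_eq c h hps
  rcases c with ⟨length, partSize, partSize_pos, emb, h1, h2, h3, h4⟩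
  simp only at h hps hemb
  subst h
  have hps' : partSize = fun _ => 1 := funext hps
  subst hps'
  apply OrderedFinpartition.ext
  · rfl
  · rfl
  · refine heq_of_eq ?_
    funext m r
    ext
    rw [hemb m r]
    simp [OrderedFinpartition.atomic]

theorem my_fdb {E F G : Type} [NormedAddCommGroup E] [NormedSpace ℝ E]
    [NormedAddCommGroup F] [NormedSpace ℝ F] [NormedAddCommGroup G] [NormedSpace ℝ G]
    (g : F → G) (f : E → F) (hg : ContDiff ℝ ∞ g) (hf : ContDiff ℝ ∞ f) (x : E) (j : ℕ) :
    iteratedFDeriv ℝ j (g ∘ f) x = ∑ c : OrderedFinpartition j,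
      c.compAlongOrderedFinpartition (iteratedFDeriv ℝ c.length g (f x))
        (fun m => iteratedFDeriv ℝ (c.partSize m) f x) := by
  have hq := hg.contDiffOn.ftaylorSeriesWithin uniqueDiffOn_univ
  have hp := hf.contDiffOn.ftaylorSeriesWithin uniqueDiffOn_univ
  have hcomp := hq.comp hp (mapsTo_univ f univ)
  have h1 := hcomp.eq_iteratedFDerivWithin_of_uniqueDiffOn (m := j)
    (by norm_cast; exact le_top) uniqueDiffOn_univ (mem_univ x)
  rw [iteratedFDerivWithin_univ] at h1
  rw [← h1]
  simp only [FormalMultilinearSeries.taylorComp,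
    FormalMultilinearSeries.compAlongOrderedFinpartition, ftaylorSeriesWithin,
    iteratedFDerivWithin_univ]

end FdB

/-- Let `Φ` be the (smooth) flow of a smooth vector field `X` on `ℝᴺ`
and let `z₀` satisfy `X(z₀) = 0` and `D^j X(z₀) = 0` for `1 ≤ j ≤ k−2` (`k ≥ 3`).
Then for all `t`: (i) `Φ(t,z₀) = z₀`; (ii) `d_z Φ(t,·)(z₀) = Id`;
(iii) `d_z^j Φ(t,·)(z₀) = 0` for `2 ≤ j ≤ k−2`; and
(iv) `d_z^{k−1} Φ(t,·)(z₀) = t · D^{k−1} X(z₀)`. -/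
theorem stmt_5 (N : ℕ) (hN : 1 ≤ N) (k : ℕ) (hk : 3 ≤ k)
    (X : EuclideanSpace ℝ (Fin N) → EuclideanSpace ℝ (Fin N)) (hX : ContDiff ℝ (⊤ : ℕ∞) X)
    (Φ : ℝ × EuclideanSpace ℝ (Fin N) → EuclideanSpace ℝ (Fin N)) (hΦ : ContDiff ℝ (⊤ : ℕ∞) Φ)
    (hΦ0 : ∀ z, Φ (0, z) = z)
    (hflow : ∀ t : ℝ, ∀ z, HasDerivAt (fun s : ℝ => Φ (s, z)) (X (Φ (t, z))) t)
    (z₀ : EuclideanSpace ℝ (Fin N)) (hz₀ : X z₀ = 0)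
    (hDX : ∀ j : ℕ, 1 ≤ j → j ≤ k - 2 → iteratedFDeriv ℝ j X z₀ = 0) :
    ∀ t : ℝ,
      Φ (t, z₀) = z₀ ∧
      fderiv ℝ (fun z => Φ (t, z)) z₀ = ContinuousLinearMap.id ℝ (EuclideanSpace ℝ (Fin N)) ∧
      (∀ j : ℕ, 2 ≤ j → j ≤ k - 2 → iteratedFDeriv ℝ j (fun z => Φ (t, z)) z₀ = 0) ∧
      iteratedFDeriv ℝ (k - 1) (fun z => Φ (t, z)) z₀ = t • iteratedFDeriv ℝ (k - 1) X z₀ := by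
  have hXs : ContDiff ℝ ∞ X := hX.of_le (by simp)
  have hPs : ContDiff ℝ ∞ Φ := hΦ.of_le (by simp)
  have hk2 : 1 ≤ k - 2 := by omega
  have hfix : ∀ t, Φ (t, z₀) = z₀ := my_fixed X hXs Φ hPs hΦ0 hflow z₀ hz₀
  have hΦt : ∀ t : ℝ, ContDiff ℝ ∞ (fun z => Φ (t, z)) := fun t =>
    hPs.comp (contDiff_const.prodMk contDiff_id)
  -- the function p ↦ ∂ₜΦ(p) equals X ∘ Φ
  have hXΦ : (fun p : ℝ × EuclideanSpace ℝ (Fin N) => fderiv ℝ Φ p ((1 : ℝ), (0 : EuclideanSpace ℝ (Fin N)))) = fun p => X (Φ p) := by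
    funext p
    have h1 : HasDerivAt (fun s => Φ (s, p.2)) (X (Φ (p.1, p.2))) p.1 := hflow p.1 p.2
    have h2 : HasDerivAt (fun s => Φ (s, p.2)) (fderiv ℝ Φ (p.1, p.2) ((1 : ℝ), (0 : EuclideanSpace ℝ (Fin N)))) p.1 := by
      have hD := ((hPs.differentiable (by norm_cast)) (p.1, p.2)).hasFDerivAt
      exact hD.comp_hasDerivAt _ ((hasDerivAt_id p.1).prodMk (hasDerivAt_const _ p.2))
    have h3 := h2.unique h1
    simpa using h3
  -- the master variational identity
  have master : ∀ (j : ℕ) (t : ℝ) (v : Fin j → EuclideanSpace ℝ (Fin N)),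
      HasDerivAt (fun s => iteratedFDeriv ℝ j (fun z => Φ (s, z)) z₀ v)
        (iteratedFDeriv ℝ j (fun z => X (Φ (t, z))) z₀ v) t := by
    intro j t v
    have hd := my_tderiv j Φ hPs z₀ (fun i => ((0 : ℝ), v i)) t
    have hfun : (fun s => iteratedFDeriv ℝ j Φ (s, z₀) (fun i => ((0 : ℝ), v i)))
        = fun s => iteratedFDeriv ℝ j (fun z => Φ (s, z)) z₀ v := by
      funext s
      rw [my_partial j Φ hPs s z₀ v]
    rw [hfun] at hd
    have hval : iteratedFDeriv ℝ (j + 1) Φ (t, z₀)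
          (Fin.cons ((1 : ℝ), (0 : EuclideanSpace ℝ (Fin N))) (fun i => ((0 : ℝ), v i)))
        = iteratedFDeriv ℝ j (fun z => X (Φ (t, z))) z₀ v := by
      rw [my_swap j Φ hPs (t, z₀) ((1 : ℝ), (0 : EuclideanSpace ℝ (Fin N))) (fun i => ((0 : ℝ), v i))]
      rw [show (fun x : ℝ × EuclideanSpace ℝ (Fin N) => fderiv ℝ Φ x ((1 : ℝ), (0 : EuclideanSpace ℝ (Fin N)))) = fun p => X (Φ p) from hXΦ]
      rw [← my_partial j (fun p : ℝ × EuclideanSpace ℝ (Fin N) => X (Φ p)) (hXs.comp hPs) t z₀ v]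
    rw [hval] at hd
    exact hd
  -- Faà di Bruno: vanishing of the derivatives of X ∘ Φₜ up to order k-2
  have fdbzero : ∀ (t : ℝ) (j : ℕ), 1 ≤ j → j ≤ k - 2 →
      iteratedFDeriv ℝ j (fun z => X (Φ (t, z))) z₀ = 0 := by
    intro t j hj1 hj2
    rw [show (fun z => X (Φ (t, z))) = X ∘ (fun z => Φ (t, z)) from rfl,
      my_fdb X (fun z => Φ (t, z)) hXs (hΦt t) z₀ j]
    apply Finset.sum_eq_zero
    intro c _
    have hlen1 : 1 ≤ c.length := c.length_pos (by omega)
    have hlen2 : c.length ≤ k - 2 := le_trans c.length_le hj2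
    have hzero : iteratedFDeriv ℝ c.length X ((fun z => Φ (t, z)) z₀) = 0 := by
      rw [show (fun z => Φ (t, z)) z₀ = Φ (t, z₀) from rfl, hfix t]
      exact hDX _ hlen1 hlen2
    refine ContinuousMultilinearMap.ext fun v => ?_
    rw [OrderedFinpartition.compAlongOrderFinpartition_apply, hzero]
    simp
  -- constancy of low-order derivatives
  have hconst : ∀ (j : ℕ), (∀ s : ℝ, iteratedFDeriv ℝ j (fun z => X (Φ (s, z))) z₀ = 0) →
      ∀ t : ℝ, iteratedFDeriv ℝ j (fun z => Φ (t, z)) z₀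
        = iteratedFDeriv ℝ j (fun z => Φ (0, z)) z₀ := by
    intro j hzd t
    refine ContinuousMultilinearMap.ext fun v => ?_
    have hd0 : ∀ s : ℝ, HasFDerivAt (fun s => iteratedFDeriv ℝ j (fun z => Φ (s, z)) z₀ v)
        (0 : ℝ →L[ℝ] EuclideanSpace ℝ (Fin N)) s := by
      intro s
      have h := master j s v
      rw [hzd s] at h
      have hz' : (ContinuousLinearMap.smulRight (1 : ℝ →L[ℝ] ℝ)
          ((0 : ContinuousMultilinearMap ℝ (fun _ : Fin j => EuclideanSpace ℝ (Fin N))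
            (EuclideanSpace ℝ (Fin N))) v)) = 0 := by
        ext x
        simp
      exact hz' ▸ h.hasFDerivAt
    exact is_const_of_fderiv_eq_zero (fun s => (hd0 s).differentiableAt)
      (fun s => (hd0 s).fderiv) t 0
  have hid : (fun z : EuclideanSpace ℝ (Fin N) => Φ (0, z)) = fun z : EuclideanSpace ℝ (Fin N) => z := funext hΦ0
  -- part (ii)
  have hder1 : ∀ t : ℝ, fderiv ℝ (fun z => Φ (t, z)) z₀ = ContinuousLinearMap.id ℝ (EuclideanSpace ℝ (Fin N)) := by
    intro t
    have h1 := hconst 1 (fun s => fdbzero s 1 le_rfl hk2) t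
    refine ContinuousLinearMap.ext fun v => ?_
    have h2 : fderiv ℝ (fun z => Φ (t, z)) z₀ v
        = iteratedFDeriv ℝ 1 (fun z => Φ (t, z)) z₀ (fun _ => v) := by
      rw [iteratedFDeriv_one_apply]
    rw [h2, h1, hid, iteratedFDeriv_one_apply]
    simp
  -- part (iii)
  have hpart3 : ∀ (t : ℝ) (j : ℕ), 2 ≤ j → j ≤ k - 2 →
      iteratedFDeriv ℝ j (fun z => Φ (t, z)) z₀ = 0 := by
    intro t j hj2' hjk
    rw [hconst j (fun s => fdbzero s j (by omega) hjk) t, hid, my_id_iter j hj2' z₀]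
  -- Faà di Bruno at order k-1
  have fdbtop : ∀ t : ℝ, iteratedFDeriv ℝ (k - 1) (fun z => X (Φ (t, z))) z₀
      = iteratedFDeriv ℝ (k - 1) X z₀ := by
    intro t
    rw [show (fun z => X (Φ (t, z))) = X ∘ (fun z => Φ (t, z)) from rfl,
      my_fdb X (fun z => Φ (t, z)) hXs (hΦt t) z₀ (k - 1)]
    rw [Finset.sum_eq_single_of_mem (OrderedFinpartition.atomic (k - 1)) (Finset.mem_univ _) ?_]
    · refine ContinuousMultilinearMap.ext fun v => ?_
      rw [OrderedFinpartition.compAlongOrderFinpartition_apply]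
      have happ : (OrderedFinpartition.atomic (k - 1)).applyOrderedFinpartition
          (fun m => iteratedFDeriv ℝ ((OrderedFinpartition.atomic (k - 1)).partSize m)
            (fun z => Φ (t, z)) z₀) v = v := by
        funext m
        simp only [OrderedFinpartition.applyOrderedFinpartition,
          OrderedFinpartition.atomic, iteratedFDeriv_one_apply]
        show iteratedFDeriv ℝ 1 (fun z => Φ (t, z)) z₀ (fun _ => v m) = v m
        rw [iteratedFDeriv_one_apply, hder1 t]
        rfl
      rw [happ]
      have hq0 : iteratedFDeriv ℝ (OrderedFinpartition.atomic (k - 1)).length X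
          ((fun z => Φ (t, z)) z₀) = iteratedFDeriv ℝ (k - 1) X z₀ := by
        rw [show ((fun z => Φ (t, z)) z₀) = Φ (t, z₀) from rfl, hfix t]
        rfl
      rw [hq0]
      rfl
    · intro c _ hc
      have hlen2 : c.length ≤ k - 2 := by
        have h1 : c.length ≤ k - 1 := c.length_le
        have h2 : c.length ≠ k - 1 := fun h => hc (my_atomic c h)
        omega
      have hlen1 : 1 ≤ c.length := c.length_pos (by omega)
      have hzero : iteratedFDeriv ℝ c.length X ((fun z => Φ (t, z)) z₀) = 0 := by
        rw [show (fun z => Φ (t, z)) z₀ = Φ (t, z₀) from rfl, hfix t]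
        exact hDX _ hlen1 hlen2
      refine ContinuousMultilinearMap.ext fun v => ?_
      rw [OrderedFinpartition.compAlongOrderFinpartition_apply, hzero]
      simp
  -- part (iv)
  have hpart4 : ∀ t : ℝ, iteratedFDeriv ℝ (k - 1) (fun z => Φ (t, z)) z₀
      = t • iteratedFDeriv ℝ (k - 1) X z₀ := by
    intro t
    refine ContinuousMultilinearMap.ext fun v => ?_
    set c : EuclideanSpace ℝ (Fin N) := iteratedFDeriv ℝ (k - 1) X z₀ v with hc
    have hφd : ∀ s : ℝ, HasDerivAt
        (fun s => iteratedFDeriv ℝ (k - 1) (fun z => Φ (s, z)) z₀ v - s • c) 0 s := by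
      intro s
      have h1 := master (k - 1) s v
      rw [fdbtop s] at h1
      have h2 : HasDerivAt (fun s : ℝ => s • c) c s := by
        simpa using (hasDerivAt_id s).smul_const c
      exact (h1.sub h2).congr_deriv (by rw [hc, sub_self])
    have hconst2 := is_const_of_fderiv_eq_zero (𝕜 := ℝ)
      (f := fun s => iteratedFDeriv ℝ (k - 1) (fun z => Φ (s, z)) z₀ v - s • c)
      (fun s => ((hφd s).hasFDerivAt).differentiableAt)
      (fun s => by
        have h5 := (hφd s).hasFDerivAt
        have hz' : (ContinuousLinearMap.toSpanSingleton ℝ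
            (0 : EuclideanSpace ℝ (Fin N))) = 0 := by
          ext x
          simp
        rw [hz'] at h5
        exact h5.fderiv) t 0
    simp only [zero_smul, sub_zero] at hconst2
    have h0 : iteratedFDeriv ℝ (k - 1) (fun z => Φ (0, z)) z₀ v = 0 := by
      rw [hid, my_id_iter (k - 1) (by omega) z₀]
      rfl
    rw [h0] at hconst2
    rw [sub_eq_zero] at hconst2
    rw [hconst2]
    simp [hc]
  intro t
  exact ⟨hfix t, hder1 t, fun j h2 hk2' => hpart3 t j h2 hk2', hpart4 t⟩
end

section
/- As λ → +∞, 2π ∫₀^∞ r³ e^{−r²} (4 + r^{10} λ²)^{−1/2} dr = 2π · Γ(2/5) Γ(11/10) / (2^{1/5} √π) · λ^{−4/5} + O(λ^{−1}). -/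
open MeasureTheory Set Real

/-!
Substituting `r = c x` with `c = λ^(-1/5)` turns the integral into
`c⁴ ∫₀^∞ e^(-(c x)²) g(x) dx` with `g(x) = x³ (4 + x¹⁰)^(-1/2)`. Without the Gaussian factor
this is a beta integral (substitute `x¹⁰ = 4u`, then `u = 1/t - 1`), which gives the constant. Since
`x² g(x) ≤ 1`, the Gaussian factor changes it by at most `2c`: on `(0, 1/c]` use
`1 - e^(-(c x)²) ≤ (c x)²`, and beyond that `g(x) ≤ x⁻²`.
-/

theorem integral_Ioo_rpow_mul_one_sub_rpow {a b : ℝ} (ha : 0 < a) (hb : 0 < b) :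
    ∫ x in Ioo 0 1, x ^ (a - 1) * (1 - x) ^ (b - 1) = Gamma a * Gamma b / Gamma (a + b) := by
  have hbeta :
      Complex.betaIntegral a b = ↑(∫ x in (0:ℝ)..1, x ^ (a - 1) * (1 - x) ^ (b - 1)) := by
    rw [Complex.betaIntegral, ← intervalIntegral.integral_ofReal]
    refine intervalIntegral.integral_congr fun x hx => ?_
    rw [uIcc_of_le zero_le_one] at hx
    push_cast
    rw [Complex.ofReal_cpow hx.1, Complex.ofReal_cpow (sub_nonneg.2 hx.2)]
    push_cast; rfl
  have h := Complex.betaIntegral_eq_Gamma_mul_div a b (by simpa) (by simpa)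
  rw [hbeta, ← Complex.ofReal_add, Complex.Gamma_ofReal, Complex.Gamma_ofReal,
    Complex.Gamma_ofReal] at h
  rw [← integral_Ioc_eq_integral_Ioo, ← intervalIntegral.integral_of_le zero_le_one]
  exact_mod_cast h

theorem integral_Ioi_rpow_mul_one_add_rpow_neg {a b : ℝ} (ha : 0 < a) (hab : a < b) :
    ∫ u in Ioi 0, u ^ (a - 1) * (1 + u) ^ (-b) = Gamma a * Gamma (b - a) / Gamma b := by
  have himg : (fun x : ℝ => x⁻¹ - 1) '' Ioo 0 1 = Ioi 0 := by
    ext u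
    refine ⟨?_, fun (hu : 0 < u) =>
      ⟨(1 + u)⁻¹, ⟨by positivity, inv_lt_one_of_one_lt₀ (by linarith)⟩, by simp⟩⟩
    rintro ⟨x, ⟨hx0, hx1⟩, rfl⟩
    simpa using (one_lt_inv₀ hx0).2 hx1
  have hderiv : ∀ x ∈ Ioo (0:ℝ) 1,
      HasDerivWithinAt (fun x : ℝ => x⁻¹ - 1) (-(x ^ 2)⁻¹) (Ioo 0 1) x := fun x hx =>
    ((hasDerivAt_inv hx.1.ne').sub_const 1).hasDerivWithinAt
  have hinj : InjOn (fun x : ℝ => x⁻¹ - 1) (Ioo 0 1) := fun x _ y _ h =>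
    inv_injective (sub_left_inj.1 h)
  have hbeta := integral_Ioo_rpow_mul_one_sub_rpow (sub_pos.2 hab) ha
  rw [sub_add_cancel] at hbeta
  rw [← himg, integral_image_eq_integral_abs_deriv_smul measurableSet_Ioo hderiv hinj,
    mul_comm (Gamma a), ← hbeta]
  refine setIntegral_congr_fun measurableSet_Ioo fun x ⟨hx0, hx1⟩ => ?_
  have hx : x⁻¹ - 1 = (1 - x) * x⁻¹ := by field_simp
  rw [smul_eq_mul, abs_neg, abs_of_pos (by positivity), add_sub_cancel, hx,
    mul_rpow (by linarith) (by positivity)]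
  have hsq : (x ^ 2)⁻¹ = x ^ (-2 : ℝ) := by rw [rpow_neg hx0.le, rpow_two]
  have hpow : x ^ (b - a - 1) = x ^ (-2 : ℝ) * x ^ (-(a - 1)) * x ^ (-(-b)) := by
    rw [← rpow_add hx0, ← rpow_add hx0]; ring_nf
  rw [hsq, inv_rpow hx0.le, inv_rpow hx0.le, ← rpow_neg hx0.le, ← rpow_neg hx0.le, hpow]
  ring

theorem integral_Ioi_rpow_mul_add_rpow_neg {a b c : ℝ} (ha : 0 < a) (hab : a < b) (hc : 0 < c) :
    ∫ u in Ioi 0, u ^ (a - 1) * (c + u) ^ (-b)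
      = c ^ (a - b) * (Gamma a * Gamma (b - a) / Gamma b) := by
  have hscale := integral_comp_mul_left_Ioi' (fun u : ℝ => u ^ (a - 1) * (c + u) ^ (-b)) 0 hc
  rw [mul_zero] at hscale
  rw [← hscale, ← integral_Ioi_rpow_mul_one_add_rpow_neg ha hab, smul_eq_mul,
    ← integral_const_mul, ← integral_const_mul]
  refine setIntegral_congr_fun measurableSet_Ioi fun u (hu : 0 < u) => ?_
  have hcu : c + c * u = c * (1 + u) := by ring
  rw [hcu, mul_rpow hc.le hu.le, mul_rpow hc.le (by positivity)]
  have hc' : c ^ (a - b) = c * c ^ (a - 1) * c ^ (-b) := by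
    rw [mul_assoc, ← rpow_add hc, ← rpow_one_add' hc.le (by linarith)]; ring_nf
  rw [hc']; ring

theorem integral_Ioi_rpow_mul_add_rpow_rpow_neg {a b c p : ℝ} (ha : 0 < a) (hab : a < b)
    (hc : 0 < c) (hp : 0 < p) :
    ∫ x in Ioi 0, x ^ (p * a - 1) * (c + x ^ p) ^ (-b)
      = c ^ (a - b) / p * (Gamma a * Gamma (b - a) / Gamma b) := by
  have hsubst := integral_comp_rpow_Ioi_of_pos (g := fun u => u ^ (a - 1) * (c + u) ^ (-b)) hp
  rw [integral_Ioi_rpow_mul_add_rpow_neg ha hab hc] at hsubst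
  rw [div_eq_inv_mul, mul_assoc, ← hsubst, ← integral_const_mul]
  refine setIntegral_congr_fun measurableSet_Ioi fun x (hx : 0 < x) => ?_
  have hx' : x ^ (p * a - 1) = x ^ (p - 1) * (x ^ p) ^ (a - 1) := by
    rw [← rpow_mul hx.le, ← rpow_add hx]; ring_nf
  rw [smul_eq_mul, hx']
  field_simp

theorem integral_Ioi_pow_three_mul_rpow :
    ∫ x in Ioi 0, x ^ 3 * (4 + x ^ 10) ^ (-(1:ℝ) / 2)
      = Gamma (2 / 5) * Gamma (11 / 10) / ((2 : ℝ) ^ ((1:ℝ) / 5) * √π) := by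
  have h := integral_Ioi_rpow_mul_add_rpow_rpow_neg (a := 2 / 5) (b := 1 / 2) (c := 4) (p := 10)
    (by norm_num) (by norm_num) (by norm_num) (by norm_num)
  have hpow : ∀ x ∈ Ioi (0:ℝ), x ^ 3 * (4 + x ^ 10) ^ (-(1:ℝ) / 2)
      = x ^ ((10:ℝ) * (2 / 5) - 1) * (4 + x ^ (10:ℝ)) ^ (-(1 / 2 : ℝ)) := fun x _ => by
    rw [show (10:ℝ) * (2 / 5) - 1 = (3:ℕ) by norm_num, show (10:ℝ) = (10:ℕ) by norm_num,
      rpow_natCast, rpow_natCast]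
    norm_num
  have hGamma : Gamma (11 / 10) = Gamma (1 / 10) / 10 := by
    rw [show (11 / 10 : ℝ) = 1 / 10 + 1 by norm_num, Gamma_add_one (by norm_num)]; ring
  have h4 : (4:ℝ) ^ ((2:ℝ) / 5 - 1 / 2) = ((2 : ℝ) ^ ((1:ℝ) / 5))⁻¹ := by
    rw [show (4:ℝ) = 2 ^ (2:ℝ) by norm_num, ← rpow_mul (by norm_num),
      ← rpow_neg (by norm_num)]
    norm_num
  rw [setIntegral_congr_fun measurableSet_Ioi hpow, h, h4, hGamma, Gamma_one_half_eq]
  norm_num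
  field_simp

theorem setIntegral_Ioi_le_div_of_sq_mul_le {g : ℝ → ℝ} {M T : ℝ} (hT : 0 < T)
    (hg : IntegrableOn g (Ioi T)) (hgM : ∀ s ∈ Ioi T, s ^ 2 * g s ≤ M) :
    ∫ s in Ioi T, g s ≤ M / T := by
  have hint : IntegrableOn (fun s : ℝ => M * s ^ (-2 : ℝ)) (Ioi T) :=
    (integrableOn_Ioi_rpow_of_lt (by norm_num) hT).const_mul M
  calc ∫ s in Ioi T, g s ≤ ∫ s in Ioi T, M * s ^ (-2 : ℝ) := by
        refine setIntegral_mono_on hg hint measurableSet_Ioi fun s (hs : T < s) => ?_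
        have hs0 : 0 < s := hT.trans hs
        rw [rpow_neg hs0.le, rpow_two, ← div_eq_mul_inv, le_div_iff₀ (by positivity), mul_comm]
        exact hgM s hs
    _ = M / T := by
        rw [integral_const_mul, integral_Ioi_rpow_of_lt (by norm_num) hT]
        norm_num [rpow_neg_one, div_eq_mul_inv]

theorem integrableOn_Ioi_of_sq_mul_le {g : ℝ → ℝ} {M : ℝ} (hg : Continuous g)
    (hg0 : ∀ s ∈ Ioi 0, 0 ≤ g s) (hgM : ∀ s ∈ Ioi 0, s ^ 2 * g s ≤ M) :
    IntegrableOn g (Ioi 0) := by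
  rw [← Ioc_union_Ioi_eq_Ioi zero_le_one, integrableOn_union]
  refine ⟨(hg.integrableOn_Icc).mono_set Ioc_subset_Icc_self, ?_⟩
  refine Integrable.mono' ((integrableOn_Ioi_rpow_of_lt (by norm_num : (-2:ℝ) < -1)
    one_pos).const_mul M) hg.aestronglyMeasurable.restrict ?_
  refine ae_restrict_of_forall_mem measurableSet_Ioi fun s (hs : 1 < s) => ?_
  have hs0 : 0 < s := one_pos.trans hs
  rw [norm_of_nonneg (hg0 s hs0), rpow_neg hs0.le, rpow_two, ← div_eq_mul_inv,
    le_div_iff₀ (by positivity), mul_comm]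
  exact hgM s hs0

theorem abs_integral_exp_mul_sub_integral_le {g : ℝ → ℝ} {M δ : ℝ} (hδ : 0 < δ)
    (hg : IntegrableOn g (Ioi 0)) (hg0 : ∀ s ∈ Ioi 0, 0 ≤ g s)
    (hgM : ∀ s ∈ Ioi 0, s ^ 2 * g s ≤ M) :
    |(∫ s in Ioi 0, exp (-(δ * s) ^ 2) * g s) - ∫ s in Ioi 0, g s| ≤ 2 * M * δ := by
  set h : ℝ → ℝ := fun s => (1 - exp (-(δ * s) ^ 2)) * g s
  have hexp (s : ℝ) : 0 ≤ 1 - exp (-(δ * s) ^ 2) ∧ 1 - exp (-(δ * s) ^ 2) ≤ (δ * s) ^ 2 :=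
    ⟨sub_nonneg.2 (exp_le_one_iff.2 (by nlinarith)),
      by linarith [add_one_le_exp (-(δ * s) ^ 2)]⟩
  have he : IntegrableOn (fun s => exp (-(δ * s) ^ 2) * g s) (Ioi 0) := by
    refine hg.bdd_mul (c := 1) (by fun_prop) (Filter.Eventually.of_forall fun s => ?_)
    rw [norm_of_nonneg (exp_pos _).le]; linarith [(hexp s).1]
  have hh : IntegrableOn h (Ioi 0) := by
    simpa only [h, sub_mul, one_mul] using (hg.sub he : IntegrableOn (fun s => g s - _) _)
  have hh0 : ∀ s ∈ Ioi 0, 0 ≤ h s := fun s hs => mul_nonneg (hexp s).1 (hg0 s hs)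
  have hdiff : (∫ s in Ioi 0, exp (-(δ * s) ^ 2) * g s) - ∫ s in Ioi 0, g s
      = -∫ s in Ioi 0, h s := by
    rw [← integral_sub he hg, ← integral_neg]
    congr 1; ext s; simp only [h]; ring
  have hT : 0 < δ⁻¹ := inv_pos.2 hδ
  have hnear : ∫ s in Ioc 0 δ⁻¹, h s ≤ M * δ := by
    calc ∫ s in Ioc 0 δ⁻¹, h s ≤ ∫ s in Ioc 0 δ⁻¹, δ ^ 2 * M := by
          refine setIntegral_mono_on (hh.mono_set Ioc_subset_Ioi_self)
            (integrableOn_const measure_Ioc_lt_top.ne) measurableSet_Ioc fun s hs => ?_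
          have hs0 : s ∈ Ioi 0 := Ioc_subset_Ioi_self hs
          calc h s ≤ (δ * s) ^ 2 * g s := mul_le_mul_of_nonneg_right (hexp s).2 (hg0 s hs0)
            _ = δ ^ 2 * (s ^ 2 * g s) := by ring
            _ ≤ δ ^ 2 * M := mul_le_mul_of_nonneg_left (hgM s hs0) (sq_nonneg δ)
      _ = M * δ := by
          rw [setIntegral_const, Real.volume_real_Ioc_of_le hT.le, smul_eq_mul, sub_zero]
          field_simp
  have hfar : ∫ s in Ioi δ⁻¹, h s ≤ M * δ := by
    have hle : ∀ s ∈ Ioi δ⁻¹, s ^ 2 * h s ≤ M := fun s hs => by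
      have hs0 : s ∈ Ioi 0 := lt_trans hT hs
      have hhg : h s ≤ g s := by
        simp only [h]; nlinarith [exp_pos (-(δ * s) ^ 2), hg0 s hs0]
      nlinarith [hgM s hs0, sq_nonneg s]
    simpa using setIntegral_Ioi_le_div_of_sq_mul_le hT (hh.mono_set (Ioi_subset_Ioi hT.le)) hle
  rw [hdiff, abs_neg, abs_of_nonneg (setIntegral_nonneg measurableSet_Ioi hh0),
    ← Ioc_union_Ioi_eq_Ioi hT.le, setIntegral_union (Ioc_disjoint_Ioi le_rfl) measurableSet_Ioi
      (hh.mono_set Ioc_subset_Ioi_self) (hh.mono_set (Ioi_subset_Ioi hT.le))]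
  linarith

theorem continuous_pow_three_mul_rpow :
    Continuous fun s : ℝ => s ^ 3 * (4 + s ^ 10) ^ (-(1:ℝ) / 2) :=
  (continuous_pow 3).mul ((continuous_const.add (continuous_pow 10)).rpow_const
    fun s => Or.inl (by positivity : (0:ℝ) < 4 + s ^ 10).ne')

theorem sq_mul_pow_three_mul_rpow_le_one (s : ℝ) :
    s ^ 2 * (s ^ 3 * (4 + s ^ 10) ^ (-(1:ℝ) / 2)) ≤ 1 := by
  have hsqrt : s ^ 5 ≤ √(4 + s ^ 10) := le_sqrt_of_sq_le (by nlinarith)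
  rw [neg_div, rpow_neg (by positivity), ← sqrt_eq_rpow, ← mul_assoc, ← pow_add,
    ← div_eq_mul_inv, div_le_one (by positivity)]
  exact hsqrt

theorem abs_integral_exp_mul_pow_three_mul_rpow_sub_le {c : ℝ} (hc : 0 < c) :
    |(∫ x in Ioi 0, exp (-(c * x) ^ 2) * (x ^ 3 * (4 + x ^ 10) ^ (-(1:ℝ) / 2)))
      - Gamma (2 / 5) * Gamma (11 / 10) / ((2 : ℝ) ^ ((1:ℝ) / 5) * √π)| ≤ 2 * c := by
  have hg0 : ∀ s ∈ Ioi (0:ℝ), 0 ≤ s ^ 3 * (4 + s ^ 10) ^ (-(1:ℝ) / 2) :=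
    fun s (hs : 0 < s) => by positivity
  have hgM (s : ℝ) (_ : s ∈ Ioi 0) := sq_mul_pow_three_mul_rpow_le_one s
  rw [← integral_Ioi_pow_three_mul_rpow]
  simpa using abs_integral_exp_mul_sub_integral_le hc
    (integrableOn_Ioi_of_sq_mul_le continuous_pow_three_mul_rpow hg0 hgM) hg0 hgM

theorem integral_Ioi_rescale_of_pow_five_mul_eq_one {lam c : ℝ} (hc : 0 < c)
    (hcl : c ^ 5 * lam = 1) :
    ∫ r in Ioi 0, r ^ 3 * exp (-r ^ 2) * (4 + r ^ 10 * lam ^ 2) ^ (-(1:ℝ) / 2)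
      = c ^ 4 * ∫ x in Ioi 0, exp (-(c * x) ^ 2) * (x ^ 3 * (4 + x ^ 10) ^ (-(1:ℝ) / 2)) := by
  have hscale := integral_comp_mul_left_Ioi'
    (fun r : ℝ => r ^ 3 * exp (-r ^ 2) * (4 + r ^ 10 * lam ^ 2) ^ (-(1:ℝ) / 2)) 0 hc
  have hpt (x : ℝ) :
      (c * x) ^ 3 * exp (-(c * x) ^ 2) * (4 + (c * x) ^ 10 * lam ^ 2) ^ (-(1:ℝ) / 2)
        = c ^ 3 * (exp (-(c * x) ^ 2) * (x ^ 3 * (4 + x ^ 10) ^ (-(1:ℝ) / 2))) := by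
    rw [show (c * x) ^ 10 * lam ^ 2 = x ^ 10 * (c ^ 5 * lam) ^ 2 by ring, hcl, one_pow, mul_one]
    ring
  rw [mul_zero] at hscale
  simp_rw [← hscale, smul_eq_mul, hpt, integral_const_mul]
  ring

/-- as `λ → +∞`,
`2π ∫₀^∞ r³ e^{−r²} (4 + r^{10} λ²)^{−1/2} dr
  = 2π Γ(2/5) Γ(11/10) / (2^{1/5} √π) · λ^{−4/5} + O(λ^{−1})`. -/
theorem stmt_13 :
    ∃ C Λ : ℝ, ∀ lam : ℝ, Λ ≤ lam →
      |2 * Real.pi * (∫ r in Set.Ioi (0:ℝ),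
          r ^ 3 * Real.exp (-r ^ 2) * (4 + r ^ 10 * lam ^ 2) ^ (-(1 : ℝ) / 2))
        - 2 * Real.pi * (Real.Gamma (2 / 5) * Real.Gamma (11 / 10) /
            ((2 : ℝ) ^ ((1 : ℝ) / 5) * Real.sqrt Real.pi)) * lam ^ (-(4 : ℝ) / 5)|
      ≤ C * lam ^ (-(1 : ℝ)) := by
  refine ⟨4 * π, 1, fun lam hlam => ?_⟩
  have hlam : 0 < lam := one_pos.trans_le hlam
  set c := lam ^ (-(1:ℝ) / 5)
  have hc : 0 < c := rpow_pos_of_pos hlam _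
  have hcpow (n : ℕ) : c ^ n = lam ^ (-(n:ℝ) / 5) := by
    rw [← rpow_natCast, ← rpow_mul hlam.le]; ring_nf
  have hc4 : c ^ 4 = lam ^ (-(4:ℝ) / 5) := by simpa using hcpow 4
  have hc5 : c ^ 5 = lam ^ (-(1:ℝ)) := by rw [hcpow 5]; norm_num
  have hcl : c ^ 5 * lam = 1 := by rw [hc5, rpow_neg_one, inv_mul_cancel₀ hlam.ne']
  have hgauss := abs_integral_exp_mul_pow_three_mul_rpow_sub_le hc
  rw [integral_Ioi_rescale_of_pow_five_mul_eq_one hc hcl, ← hc4, ← hc5]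
  set J := ∫ x in Ioi 0, exp (-(c * x) ^ 2) * (x ^ 3 * (4 + x ^ 10) ^ (-(1:ℝ) / 2))
  set A := Gamma (2 / 5) * Gamma (11 / 10) / ((2 : ℝ) ^ ((1:ℝ) / 5) * √π)
  calc |2 * π * (c ^ 4 * J) - 2 * π * A * c ^ 4|
      = 2 * π * c ^ 4 * |J - A| := by
        rw [← abs_of_pos (by positivity : 0 < 2 * π * c ^ 4), ← abs_mul]; ring_nf
    _ ≤ 2 * π * c ^ 4 * (2 * c) := by gcongr
    _ = 4 * π * c ^ 5 := by ring
end

section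
/- As λ → +∞, 2π ∫₀^∞ r e^{−r²} (4 + r⁴ λ²)^{−1/2} dr = π λ^{−1} log λ − γ π λ^{−1} + O(λ^{−2}), where γ is the Euler–Mascheroni constant. -/
open MeasureTheory Set Filter Real Topology

/-!
Substituting `u = r²`, the integral becomes `(2λ)⁻¹ ∫₀^∞ e^{-u} b (1 + (bu)²)^{-1/2} du` with
`b = λ/2`, and integrating by parts against `arsinh (b u)` (which vanishes at `0`) turns it into
`(2λ)⁻¹ ∫₀^∞ e^{-u} arsinh (b u) du`. Write `arsinh x = log (2x) + D(x)` with `D ≥ 0` integrable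
on `(0, ∞)` (`D(x) ≤ 1/(4x²)` at infinity, `D(x) ≤ 1 - log x` near `0`). Since
`∫₀^∞ e^{-u} log u du = Γ'(1) = -γ`, the `log` part contributes exactly `log λ - γ`, while the `D`
part lies between `0` and `∫₀^∞ D(b u) du = b⁻¹ ∫₀^∞ D`, which is `O(λ⁻¹)`.
-/

lemma abs_log_le_two_mul_rpow_neg_half_add_self {t : ℝ} (ht : 0 < t) :
    |log t| ≤ 2 * t ^ (-(1 / 2 : ℝ)) + t := by
  have hpow : 0 < t ^ (-(1 / 2 : ℝ)) := rpow_pos_of_pos ht _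
  have hneg : -log t ≤ 2 * t ^ (-(1 / 2 : ℝ)) := by
    have := log_le_rpow_div (inv_pos.2 ht).le (one_half_pos (α := ℝ))
    rwa [log_inv, inv_rpow ht.le, ← rpow_neg ht.le, div_eq_mul_inv, inv_div, div_one,
      mul_comm] at this
  rw [abs_le]
  constructor <;> linarith [log_le_self ht.le]

lemma integrableOn_log_mul_exp_neg :
    IntegrableOn (fun t => log t * exp (-t)) (Ioi 0) := by
  have hdom : IntegrableOn (fun t => 2 * (exp (-t) * t ^ ((1 / 2 : ℝ) - 1))
      + exp (-t) * t ^ ((2 : ℝ) - 1)) (Ioi 0) :=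
    ((GammaIntegral_convergent one_half_pos).const_mul 2).add
      (GammaIntegral_convergent two_pos)
  refine hdom.mono' (by fun_prop) ?_
  filter_upwards [ae_restrict_mem measurableSet_Ioi] with t (ht : 0 < t)
  have h1 : (1 / 2 : ℝ) - 1 = -(1 / 2) := by norm_num
  rw [h1, show (2 : ℝ) - 1 = 1 by norm_num, rpow_one, norm_mul, norm_eq_abs, norm_eq_abs,
    abs_exp]
  nlinarith [abs_log_le_two_mul_rpow_neg_half_add_self ht, exp_pos (-t)]

lemma integral_log_mul_exp_neg :
    ∫ t in Ioi 0, log t * exp (-t) = -eulerMascheroniConstant := by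
  have hint : (∫ t : ℝ in Ioi 0, (t : ℂ) ^ ((1 : ℂ) - 1) * (log t * exp (-t)))
      = ((∫ t in Ioi 0, log t * exp (-t) : ℝ) : ℂ) := by
    rw [← integral_complex_ofReal]
    refine setIntegral_congr_fun measurableSet_Ioi fun t _ => ?_
    simp
  set I := ∫ t in Ioi 0, log t * exp (-t)
  have hGammaIntegral : HasDerivAt Complex.GammaIntegral (I : ℂ) 1 :=
    hint ▸ Complex.hasDerivAt_GammaIntegral (by norm_num)
  have hGamma : HasDerivAt Complex.Gamma (I : ℂ) 1 := by
    refine hGammaIntegral.congr_of_eventuallyEq ?_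
    filter_upwards [(isOpen_lt continuous_const Complex.continuous_re).mem_nhds
      (by simp : (0 : ℝ) < (1 : ℂ).re)] with s hs
    exact Complex.Gamma_eq_integral hs
  have hGammaReal : HasDerivAt Gamma I 1 := by
    have h := hGamma.real_of_complex
    rwa [Complex.ofReal_re] at h
  exact hGammaReal.unique hasDerivAt_Gamma_one

lemma exp_neg_mul_log_const_mul_eqOn {c : ℝ} (hc : 0 < c) :
    EqOn (fun u => exp (-u) * log (c * u))
      (fun u => log c * exp (-u) + log u * exp (-u)) (Ioi 0) := fun u (hu : 0 < u) => by
  simp only [log_mul hc.ne' hu.ne']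
  ring

lemma integrableOn_exp_neg_mul_log_const_mul {c : ℝ} (hc : 0 < c) :
    IntegrableOn (fun u => exp (-u) * log (c * u)) (Ioi 0) :=
  IntegrableOn.congr_fun (((integrableOn_exp_neg_Ioi 0).const_mul _).add
    integrableOn_log_mul_exp_neg) (exp_neg_mul_log_const_mul_eqOn hc).symm measurableSet_Ioi

lemma integral_exp_neg_mul_log_const_mul {c : ℝ} (hc : 0 < c) :
    ∫ u in Ioi 0, exp (-u) * log (c * u) = log c - eulerMascheroniConstant := by
  rw [setIntegral_congr_fun measurableSet_Ioi (exp_neg_mul_log_const_mul_eqOn hc),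
    integral_add ((integrableOn_exp_neg_Ioi 0).const_mul _) integrableOn_log_mul_exp_neg,
    integral_const_mul, integral_exp_neg_Ioi_zero, integral_log_mul_exp_neg]
  ring

lemma arsinh_le_self {x : ℝ} (hx : 0 ≤ x) : arsinh x ≤ x := by
  rw [← sinh_le_sinh, sinh_arsinh]
  exact self_le_sinh_iff.2 hx

noncomputable def arsinhSubLog (x : ℝ) : ℝ := arsinh x - log (2 * x)

lemma arsinhSubLog_nonneg {x : ℝ} (hx : 0 < x) : 0 ≤ arsinhSubLog x := by
  have hsqrt : x ≤ √(1 + x ^ 2) := le_sqrt_of_sq_le (by linarith)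
  rw [arsinhSubLog, sub_nonneg, log_le_iff_le_exp (by positivity), exp_arsinh]
  linarith

lemma arsinhSubLog_le_inv_sq {x : ℝ} (hx : 0 < x) : arsinhSubLog x ≤ (4 * x ^ 2)⁻¹ := by
  have hsqrt : √(1 + x ^ 2) ≤ x + (2 * x)⁻¹ := by
    refine sqrt_le_iff.2 ⟨by positivity, ?_⟩
    have : x * (2 * x)⁻¹ = 1 / 2 := by field_simp
    nlinarith [sq_nonneg (2 * x)⁻¹]
  have hexp : 2 * x * (1 + (4 * x ^ 2)⁻¹) ≤ 2 * x * exp (4 * x ^ 2)⁻¹ :=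
    mul_le_mul_of_nonneg_left (by linarith [add_one_le_exp (4 * x ^ 2)⁻¹]) (by positivity)
  have hexpand : 2 * x * (1 + (4 * x ^ 2)⁻¹) = 2 * x + (2 * x)⁻¹ := by field_simp; ring
  rw [arsinhSubLog, sub_le_iff_le_add', ← log_exp (4 * x ^ 2)⁻¹,
    ← log_mul (by positivity) (exp_pos _).ne', ← exp_le_exp, exp_log (by positivity),
    exp_arsinh]
  linarith

lemma arsinhSubLog_le_one_sub_log {x : ℝ} (hx : 0 < x) (hx1 : x ≤ 1) :
    arsinhSubLog x ≤ 1 - log x := by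
  rw [arsinhSubLog, log_mul two_ne_zero hx.ne']
  linarith [arsinh_le_self hx.le, log_pos one_lt_two]

lemma continuousOn_arsinhSubLog : ContinuousOn arsinhSubLog (Ioi 0) :=
  continuous_arsinh.continuousOn.sub <|
    (continuousOn_const.mul continuousOn_id).log fun x (hx : 0 < x) =>
      mul_ne_zero two_ne_zero hx.ne'

lemma integrableOn_arsinhSubLog : IntegrableOn arsinhSubLog (Ioi 0) := by
  have hmeas : ∀ s ⊆ Ioi (0 : ℝ), MeasurableSet s →
      AEStronglyMeasurable arsinhSubLog (volume.restrict s) := fun s hs hsm =>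
    (continuousOn_arsinhSubLog.mono hs).aestronglyMeasurable hsm
  have hnear : IntegrableOn arsinhSubLog (Ioc 0 1) := by
    have hdom : IntegrableOn (fun x => 1 - log x) (Ioc 0 1) :=
      (intervalIntegrable_iff_integrableOn_Ioc_of_le zero_le_one).1
        (intervalIntegrable_const.sub intervalIntegral.intervalIntegrable_log')
    refine hdom.mono' (hmeas _ Ioc_subset_Ioi_self measurableSet_Ioc) ?_
    filter_upwards [ae_restrict_mem measurableSet_Ioc] with x ⟨hx, hx1⟩
    rw [norm_of_nonneg (arsinhSubLog_nonneg hx)]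
    exact arsinhSubLog_le_one_sub_log hx hx1
  have hfar : IntegrableOn arsinhSubLog (Ioi 1) := by
    have hdom : IntegrableOn (fun x : ℝ => 4⁻¹ * x ^ (-2 : ℝ)) (Ioi 1) :=
      (integrableOn_Ioi_rpow_of_lt (by norm_num) one_pos).const_mul _
    refine hdom.mono' (hmeas _ (Ioi_subset_Ioi zero_le_one) measurableSet_Ioi) ?_
    filter_upwards [ae_restrict_mem measurableSet_Ioi] with x (hx : 1 < x)
    have hx0 : 0 < x := one_pos.trans hx
    rw [norm_of_nonneg (arsinhSubLog_nonneg hx0), rpow_neg hx0.le, rpow_two, ← mul_inv]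
    exact arsinhSubLog_le_inv_sq hx0
  simpa [Ioc_union_Ioi_eq_Ioi zero_le_one] using hnear.union hfar

lemma integrableOn_exp_neg_mul_arsinh_const_mul {b : ℝ} (hb : 0 ≤ b) :
    IntegrableOn (fun u => exp (-u) * arsinh (b * u)) (Ioi 0) := by
  have hdom : IntegrableOn (fun u => b * (exp (-u) * u ^ ((2 : ℝ) - 1))) (Ioi 0) :=
    (GammaIntegral_convergent two_pos).const_mul b
  have hcont : Continuous fun u => exp (-u) * arsinh (b * u) :=
    (continuous_exp.comp continuous_neg).mul (continuous_arsinh.comp (continuous_const_mul b))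
  refine hdom.mono' hcont.aestronglyMeasurable ?_
  filter_upwards [ae_restrict_mem measurableSet_Ioi] with u (hu : 0 < u)
  have hbu : 0 ≤ b * u := mul_nonneg hb hu.le
  rw [show (2 : ℝ) - 1 = 1 by norm_num, rpow_one, norm_mul, norm_of_nonneg (exp_pos _).le,
    norm_of_nonneg (arsinh_nonneg_iff.2 hbu)]
  nlinarith [arsinh_le_self hbu, exp_pos (-u)]

lemma integral_exp_neg_mul_arsinh_const_mul {b : ℝ} (hb : 0 < b) :
    ∫ u in Ioi 0, exp (-u) * ((√(1 + (b * u) ^ 2))⁻¹ * b)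
      = ∫ u in Ioi 0, exp (-u) * arsinh (b * u) := by
  have hparts := integral_Ioi_mul_deriv_eq_deriv_mul (a := 0) (a' := 0) (b' := 0)
    (u := fun u => exp (-u)) (u' := fun u => -exp (-u))
    (v := fun u => arsinh (b * u)) (v' := fun u => (√(1 + (b * u) ^ 2))⁻¹ * b)
    (fun u _ => by simpa using (hasDerivAt_neg u).exp)
    (fun u _ => by simpa using ((hasDerivAt_id u).const_mul b).arsinh)
    ?_ ?_ ?_ ?_
  · simpa [integral_neg] using hparts
  · have hsqrt (u : ℝ) : 1 ≤ √(1 + (b * u) ^ 2) := one_le_sqrt.2 (by nlinarith)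
    have hcont : Continuous fun u => exp (-u) * ((√(1 + (b * u) ^ 2))⁻¹ * b) :=
      (continuous_exp.comp continuous_neg).mul
        (((by fun_prop : Continuous fun u => √(1 + (b * u) ^ 2)).inv₀
          fun u => (one_pos.trans_le (hsqrt u)).ne').mul continuous_const)
    refine ((integrableOn_exp_neg_Ioi 0).const_mul b).mono' hcont.aestronglyMeasurable
      (ae_of_all _ fun u => ?_)
    have hinv : (√(1 + (b * u) ^ 2))⁻¹ ≤ 1 := inv_le_one_of_one_le₀ (hsqrt u)
    simp only [Pi.mul_apply, norm_mul, norm_of_nonneg (exp_pos _).le,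
      norm_of_nonneg (inv_nonneg.2 (sqrt_nonneg _)), norm_of_nonneg hb.le]
    nlinarith [mul_le_mul_of_nonneg_left hinv (mul_nonneg (exp_pos (-u)).le hb.le)]
  · simpa [Pi.mul_def] using (integrableOn_exp_neg_mul_arsinh_const_mul hb.le).neg
  · have hcont : Continuous fun u => exp (-u) * arsinh (b * u) :=
      (continuous_exp.comp continuous_neg).mul (continuous_arsinh.comp (continuous_const_mul b))
    simpa [Pi.mul_def] using (hcont.tendsto 0).mono_left nhdsWithin_le_nhds
  · have hdom : Tendsto (fun u => b * (u * exp (-u))) atTop (𝓝 0) := by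
      simpa using (tendsto_pow_mul_exp_neg_atTop_nhds_zero 1).const_mul b
    refine squeeze_zero_norm' ?_ hdom
    filter_upwards [eventually_gt_atTop 0] with u hu
    have hbu : 0 ≤ b * u := mul_nonneg hb.le hu.le
    simp only [Pi.mul_apply, norm_mul, norm_of_nonneg (exp_pos _).le,
      norm_of_nonneg (arsinh_nonneg_iff.2 hbu)]
    nlinarith [arsinh_le_self hbu, exp_pos (-u)]

lemma abs_integral_exp_neg_mul_arsinh_const_mul_sub_le {b : ℝ} (hb : 0 < b) :
    |(∫ u in Ioi 0, exp (-u) * arsinh (b * u)) - (log (2 * b) - eulerMascheroniConstant)|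
      ≤ (∫ x in Ioi 0, arsinhSubLog x) * b⁻¹ := by
  have hsplit (u : ℝ) : exp (-u) * arsinh (b * u)
      = exp (-u) * log (2 * b * u) + exp (-u) * arsinhSubLog (b * u) := by
    rw [arsinhSubLog, mul_assoc]
    ring
  have hlog := integrableOn_exp_neg_mul_log_const_mul (mul_pos two_pos hb)
  have hdefect : IntegrableOn (fun u => exp (-u) * arsinhSubLog (b * u)) (Ioi 0) := by
    refine ((integrableOn_exp_neg_mul_arsinh_const_mul hb.le).sub hlog).congr_fun
      (fun u _ => ?_) measurableSet_Ioi
    rw [Pi.sub_apply, hsplit]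
    ring
  have hscaled : IntegrableOn (fun u => arsinhSubLog (b * u)) (Ioi 0) := by
    rw [integrableOn_Ioi_comp_mul_left_iff _ _ hb, mul_zero]
    exact integrableOn_arsinhSubLog
  have hnonneg : 0 ≤ ∫ u in Ioi 0, exp (-u) * arsinhSubLog (b * u) :=
    setIntegral_nonneg measurableSet_Ioi fun u (hu : 0 < u) =>
      mul_nonneg (exp_pos _).le (arsinhSubLog_nonneg (mul_pos hb hu))
  have hle : ∫ u in Ioi 0, exp (-u) * arsinhSubLog (b * u)
      ≤ ∫ u in Ioi 0, arsinhSubLog (b * u) :=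
    setIntegral_mono_on hdefect hscaled measurableSet_Ioi fun u (hu : 0 < u) =>
      mul_le_of_le_one_left (arsinhSubLog_nonneg (mul_pos hb hu))
        (exp_le_one_iff.2 (neg_nonpos.2 hu.le))
  rw [integral_comp_mul_left_Ioi _ _ hb, mul_zero, smul_eq_mul] at hle
  rw [integral_congr_ae (ae_of_all _ hsplit), integral_add hlog hdefect,
    integral_exp_neg_mul_log_const_mul (mul_pos two_pos hb), add_sub_cancel_left,
    abs_of_nonneg hnonneg]
  linarith

lemma integral_Ioi_smul_comp_sq {E : Type*} [NormedAddCommGroup E] [NormedSpace ℝ E]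
    (g : ℝ → E) : ∫ r in Ioi 0, r • g (r ^ 2) = (2 : ℝ)⁻¹ • ∫ u in Ioi 0, g u := by
  rw [← integral_comp_rpow_Ioi_of_pos (g := g) two_pos, ← integral_smul]
  refine setIntegral_congr_fun measurableSet_Ioi fun r _ => ?_
  rw [smul_smul, show (2 : ℝ) - 1 = 1 by norm_num, rpow_one, rpow_two,
    inv_mul_cancel_left₀ two_ne_zero]

lemma rpow_neg_half_four_add_sq_mul_sq {lam : ℝ} (hlam : 0 < lam) (u : ℝ) :
    (4 + u ^ 2 * lam ^ 2) ^ (-(1 : ℝ) / 2)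
      = lam⁻¹ * ((√(1 + (lam / 2 * u) ^ 2))⁻¹ * (lam / 2)) := by
  have hsqrt : √(1 + (lam / 2 * u) ^ 2) = √(4 + u ^ 2 * lam ^ 2) / 2 := by
    rw [show 1 + (lam / 2 * u) ^ 2 = (4 + u ^ 2 * lam ^ 2) / 2 ^ 2 by ring,
      sqrt_div' _ (by positivity), sqrt_sq two_pos.le]
  have hpos : 0 < √(4 + u ^ 2 * lam ^ 2) := sqrt_pos.2 (by positivity)
  rw [neg_div, rpow_neg (by positivity), ← sqrt_eq_rpow, hsqrt]
  field_simp

lemma integral_mul_exp_neg_sq_mul_rpow_neg_half {lam : ℝ} (hlam : 0 < lam) :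
    ∫ r in Ioi 0, r * exp (-r ^ 2) * (4 + r ^ 4 * lam ^ 2) ^ (-(1 : ℝ) / 2)
      = (2 * lam)⁻¹ * ∫ u in Ioi 0, exp (-u) * arsinh (lam / 2 * u) := by
  let g u := exp (-u) * (4 + u ^ 2 * lam ^ 2) ^ (-(1 : ℝ) / 2)
  calc _ = ∫ r in Ioi 0, r • g (r ^ 2) := by
        simp only [g, smul_eq_mul, ← pow_mul, mul_assoc]
    _ = 2⁻¹ * ∫ u in Ioi 0, g u := (integral_Ioi_smul_comp_sq g).trans (smul_eq_mul _ _)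
    _ = (2 * lam)⁻¹ * ∫ u in Ioi 0, exp (-u) * ((√(1 + (lam / 2 * u) ^ 2))⁻¹ * (lam / 2)) := by
        simp only [g, rpow_neg_half_four_add_sq_mul_sq hlam, mul_left_comm (exp _) lam⁻¹,
          integral_const_mul, mul_inv]
        ring
    _ = _ := by rw [integral_exp_neg_mul_arsinh_const_mul (half_pos hlam)]

/-- as `λ → +∞`,
`2π ∫₀^∞ r e^{−r²} (4 + r⁴ λ²)^{−1/2} dr = π λ^{−1} log λ − γ π λ^{−1} + O(λ^{−2})`,
where `γ` is the Euler–Mascheroni constant. -/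
theorem stmt_14 :
    ∃ C Λ : ℝ, ∀ lam : ℝ, Λ ≤ lam →
      |2 * Real.pi * (∫ r in Set.Ioi (0:ℝ),
          r * Real.exp (-r ^ 2) * (4 + r ^ 4 * lam ^ 2) ^ (-(1 : ℝ) / 2))
        - (Real.pi * lam⁻¹ * Real.log lam
            - Real.eulerMascheroniConstant * Real.pi * lam⁻¹)|
      ≤ C * lam ^ (-(2 : ℝ)) := by
  refine ⟨2 * π * ∫ x in Ioi 0, arsinhSubLog x, 1, fun lam hlam => ?_⟩
  have hlam0 : 0 < lam := one_pos.trans_le hlam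
  have hestimate := abs_integral_exp_neg_mul_arsinh_const_mul_sub_le (half_pos hlam0)
  rw [mul_div_cancel₀ _ two_ne_zero] at hestimate
  rw [integral_mul_exp_neg_sq_mul_rpow_neg_half hlam0, rpow_neg hlam0.le, rpow_two]
  set A := ∫ u in Ioi 0, exp (-u) * arsinh (lam / 2 * u)
  have hfactor : 2 * π * ((2 * lam)⁻¹ * A)
      - (π * lam⁻¹ * log lam - eulerMascheroniConstant * π * lam⁻¹)
      = π * lam⁻¹ * (A - (log lam - eulerMascheroniConstant)) := by ring
  rw [hfactor, abs_mul, abs_of_pos (by positivity)]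
  calc π * lam⁻¹ * |A - (log lam - eulerMascheroniConstant)|
      ≤ π * lam⁻¹ * ((∫ x in Ioi 0, arsinhSubLog x) * (lam / 2)⁻¹) := by gcongr
    _ = _ := by ring
end
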